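/- arXiv:math/0402236 — 7 statements merged into one kernel-verified Lean document; each statement's English description precedes it below -/
import Mathlib

section
/- Every countably compact, complete (in the two-sided uniformity) subset of a uniform space is compact. In particular, a closed countably compact subset of a Raïkov-complete topological group is compact. -/
/-- A subset `s` of a topological space is countably compact if every countable
open cover of `s` has a finite subcover. -/
def IsCountablyCompactSet {X : Type*} [TopologicalSpace X] (s : Set X) : Prop :=
  ∀ U : ℕ → Set X, (∀ n, IsOpen (U n)) → s ⊆ ⋃ n, U n → ∃ t : Finset ℕ, s ⊆ ⋃ n ∈ t, U n

/-- The filter of entourages of the two-sided uniformity of a topological group. -/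
def twoSidedUniformity (G : Type*) [Group G] [TopologicalSpace G] : Filter (G × G) :=
  (nhds (1 : G)).lift' (fun U => {p : G × G | p.1⁻¹ * p.2 ∈ U ∧ p.2 * p.1⁻¹ ∈ U})

/-- A topological group is Raïkov-complete if every Cauchy filter with respect to
its two-sided uniformity converges. -/
def RaikovComplete (G : Type*) [Group G] [TopologicalSpace G] : Prop :=
  ∀ f : Filter G, f.NeBot → f ×ˢ f ≤ twoSidedUniformity G → ∃ x : G, f ≤ nhds x

/-!
A countably compact set is totally bounded: otherwise some entourage `V` admits a sequence in the
set whose terms are pairwise not `V`-close, and such a sequence has no cluster point. Totally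
bounded and complete sets are compact. For a topological group, the two-sided uniformity is the
infimum of the left and right uniformities, which induces the group topology; Raïkov completeness
says exactly that this uniform space is complete, so its closed subsets are complete.
-/

open Filter Set Topology Uniformity

theorem IsCountablyCompact.totallyBounded {α : Type*} [UniformSpace α] {s : Set α}
    (hs : IsCountablyCompact s) : TotallyBounded s := by
  intro V hV
  by_contra! h
  obtain ⟨u, hus, huV⟩ : ∃ u : ℕ → α, (∀ n, u n ∈ s) ∧ ∀ n, ∀ m < n, (u n, u m) ∉ V := by
    simp only [not_subset, mem_iUnion₂, not_exists, exists_prop] at h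
    simpa only [forall_and, forall_mem_image, not_and, mem_Iio, mem_ofPred_eq] using!
      seq_of_forall_finite_exists h
  obtain ⟨y, -, hy⟩ := hs.seq_clusterPt u (.of_forall hus)
  obtain ⟨W, hW, hWsymm, hWV⟩ := comp_symm_mem_uniformity_sets hV
  have hfreq := mapClusterPt_iff_frequently.1 hy _ (UniformSpace.ball_mem_nhds y hW)
  obtain ⟨m, -, hm⟩ := frequently_atTop.1 hfreq 0
  obtain ⟨n, hmn, hn⟩ := frequently_atTop.1 hfreq (m + 1)
  exact huV n m hmn (hWV ⟨y, hWsymm.symm _ _ hn, hm⟩)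

theorem IsCountablyCompact.isCompact_of_isComplete {α : Type*} [UniformSpace α] {s : Set α}
    (hs : IsCountablyCompact s) (hc : IsComplete s) : IsCompact s :=
  isCompact_iff_totallyBounded_isComplete.2 ⟨hs.totallyBounded, hc⟩

section

variable (G : Type*) [Group G] [TopologicalSpace G] [IsTopologicalGroup G]

/-- The topology is replaced so that it is definitionally the given topology of `G`. -/
abbrev twoSidedUniformSpace : UniformSpace G :=
  (IsTopologicalGroup.leftUniformSpace G ⊓ IsTopologicalGroup.rightUniformSpace G).replaceTopology
    (by rw [UniformSpace.toTopologicalSpace_inf]; exact (inf_idem _).symm)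

theorem uniformity_twoSidedUniformSpace :
    𝓤[twoSidedUniformSpace G] = twoSidedUniformity G := by
  refine le_antisymm ?_ ?_
  · exact le_lift'.2 fun U hU => inter_mem_inf (preimage_mem_comap hU) (preimage_mem_comap hU)
  · rintro _ ⟨_, ⟨U, hU, hUt⟩, _, ⟨V, hV, hVt⟩, rfl⟩
    exact mem_of_superset (mem_lift' (inter_mem hU hV))
      fun p hp => ⟨hUt hp.1.1, hVt hp.2.2⟩

variable {G}

theorem RaikovComplete.completeSpace (hG : RaikovComplete G) :
    @CompleteSpace G (twoSidedUniformSpace G) :=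
  @CompleteSpace.mk _ (twoSidedUniformSpace G) fun {f} hf =>
    hG f hf.1 (uniformity_twoSidedUniformSpace G ▸ hf.2)

end

theorem countably_compact_complete_is_compact :
    (∀ (α : Type*) [UniformSpace α] (s : Set α),
      IsCountablyCompactSet s → IsComplete s → IsCompact s)
    ∧
    (∀ (G : Type*) [Group G] [TopologicalSpace G] [IsTopologicalGroup G] [T2Space G],
      RaikovComplete G → ∀ s : Set G, IsClosed s → IsCountablyCompactSet s → IsCompact s) := by
  refine ⟨fun α _ s hs hc => ?_, fun G _ _ _ _ hG s hclosed hs => ?_⟩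
  · exact (isCountablyCompact_iff_countable_open_cover.2 hs).isCompact_of_isComplete hc
  · let := twoSidedUniformSpace G
    have := hG.completeSpace
    exact (isCountablyCompact_iff_countable_open_cover.2 hs).isCompact_of_isComplete
      hclosed.isComplete
end

section
/- Every Hausdorff group topology on a discrete c-compact (equivalently, discrete hereditarily h-complete) group is anticompact: every compact subset is finite. -/
universe u v

/-- A (discrete) group is hereditarily h-complete (equivalently, c-compact, since it
is discrete) if every homomorphic image of every subgroup of it in a Hausdorff
topological group is closed.  (Homomorphisms from a discrete group are
automatically continuous.) -/
def DiscreteHereditarilyHComplete (G : Type u) [Group G] : Prop :=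
  ∀ (S : Subgroup G) (H : Type v) [Group H] [TopologicalSpace H] [IsTopologicalGroup H]
    [T2Space H] (f : S →* H), IsClosed (Set.range f)

/-!
An infinite compact set has an accumulation point `a`, so the subgroup `S` generated by `a` and a
countably infinite subset of the compact set is countable and not discrete. As `S` is countable,
neighbourhoods of `1` chosen to handle one element of `S` at a time give a coarser first countable
Hausdorff group topology on `S`, still without isolated points. The two-sided Cauchy sequences of
`S` form a topological group whose separation quotient is a Hausdorff group containing `S` as a
dense subgroup (the Raikov completion). By a Baire category argument (enumerate `S` and dodge its
elements one by one) some Cauchy sequence converges to no element of `S`, so `S` is not closed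
in it.
-/

open Filter Topology Pointwise

theorem exists_seq_forall_rel {α : Type*} {p : α → Prop} {R : ℕ → α → α → Prop}
    (h₀ : ∃ a, p a) (h : ∀ n a, p a → ∃ b, p b ∧ R n a b) :
    ∃ f : ℕ → α, ∀ n, p (f n) ∧ R n (f n) (f (n + 1)) := by
  obtain ⟨a, ha⟩ := h₀
  choose! next hnext using h
  let f : ℕ → α := fun n => Nat.rec a next n
  have hf : ∀ n, p (f n) := fun n => by
    induction n with
    | zero => exact ha
    | succ n ih => exact (hnext n _ ih).1
  exact ⟨f, fun n => ⟨hf n, (hnext n _ (hf n)).2⟩⟩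

theorem Subgroup.countable_closure {G : Type*} [Group G] {s : Set G} (hs : s.Countable) :
    Countable (Subgroup.closure s) := by
  have := hs.to_subtype
  rw [FreeGroup.closure_eq_range]
  exact (FreeGroup.lift _).rangeRestrict_surjective.countable

theorem Subgroup.accPt_one_of_accPt {G : Type*} [Group G] [TopologicalSpace G]
    [IsTopologicalGroup G] {S : Subgroup G} {a : G} (ha : a ∈ S) (h : AccPt a (𝓟 (S : Set G))) :
    AccPt 1 (𝓟 (S : Set G)) := by
  rw [accPt_iff_nhds] at h ⊢
  intro W hW
  have hW' : (a⁻¹ * ·) ⁻¹' W ∈ 𝓝 a :=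
    (continuous_const_mul a⁻¹).tendsto' a 1 (inv_mul_cancel a) hW
  obtain ⟨y, ⟨hyW, hyS⟩, hya⟩ := h _ hW'
  exact ⟨a⁻¹ * y, ⟨hyW, S.mul_mem (S.inv_mem ha) hyS⟩, fun h1 => hya (inv_mul_eq_one.1 h1).symm⟩

/-- The neighbourhoods of `1` of a first countable Hausdorff group topology without isolated
points. -/
structure NbhdChain (T : Type*) [Group T] where
  U : ℕ → Set T
  one_mem : ∀ n, (1 : T) ∈ U n
  inv_mem : ∀ {n x}, x ∈ U n → x⁻¹ ∈ U n
  mul_mem : ∀ {n x y}, x ∈ U (n + 1) → y ∈ U (n + 1) → x * y ∈ U n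
  conj_mem : ∀ s n, ∃ m, ∀ x ∈ U m, s * x * s⁻¹ ∈ U n
  eq_one_of_forall_mem : ∀ {s}, (∀ n, s ∈ U n) → s = 1
  exists_ne_one : ∀ n, ∃ e ∈ U n, e ≠ 1

namespace NbhdChain

variable {T : Type u} [Group T] (C : NbhdChain T)

theorem antitone : Antitone C.U :=
  antitone_nat_of_succ_le fun n x hx => by simpa using C.mul_mem hx (C.one_mem (n + 1))

def IsLeftCauchy (x : ℕ → T) : Prop :=
  ∀ n, ∀ᶠ pq : ℕ × ℕ in atTop, (x pq.1)⁻¹ * x pq.2 ∈ C.U n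

variable {C}

theorem IsLeftCauchy.eventually_conj_mem {y : ℕ → T} (hy : C.IsLeftCauchy y) (n : ℕ) :
    ∃ m, ∀ᶠ p in atTop, ∀ z ∈ C.U m, (y p)⁻¹ * z * y p ∈ C.U n := by
  obtain ⟨N, hN⟩ := eventually_atTop_prod_self'.1 (hy (n + 2))
  obtain ⟨m, hm⟩ := C.conj_mem (y N)⁻¹ (n + 2)
  refine ⟨m, eventually_atTop.2 ⟨N, fun p hp z hz => ?_⟩⟩
  have ha := hN p hp N le_rfl
  -- `(y p)⁻¹ * z * y p` is the conjugate of `(y N)⁻¹ * z * y N` by `(y p)⁻¹ * y N`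
  convert C.mul_mem (C.mul_mem ha (hm z hz)) (C.antitone (Nat.le_succ _) (C.inv_mem ha)) using 1
  group

theorem IsLeftCauchy.mul {x y : ℕ → T} (hx : C.IsLeftCauchy x) (hy : C.IsLeftCauchy y) :
    C.IsLeftCauchy (x * y) := by
  intro n
  obtain ⟨m, hm⟩ := hy.eventually_conj_mem (n + 1)
  have hm' : ∀ᶠ pq : ℕ × ℕ in atTop, ∀ z ∈ C.U m, (y pq.1)⁻¹ * z * y pq.1 ∈ C.U (n + 1) := by
    rw [← prod_atTop_atTop_eq]
    exact hm.prod_inl atTop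
  filter_upwards [hm', hx m, hy (n + 1)] with pq hconj hxpq hypq
  convert C.mul_mem (hconj _ hxpq) hypq using 1
  simp only [Pi.mul_apply]
  group

variable (C)

theorem isLeftCauchy_const (s : T) : C.IsLeftCauchy (Function.const ℕ s) :=
  fun n => Eventually.of_forall fun _ => by simpa using C.one_mem n

def cauchySubgroup : Subgroup (ℕ → T) where
  carrier := {x | C.IsLeftCauchy x ∧ C.IsLeftCauchy x⁻¹}
  one_mem' := ⟨C.isLeftCauchy_const 1, by simpa using C.isLeftCauchy_const 1⟩
  mul_mem' := fun ⟨hx, hx'⟩ ⟨hy, hy'⟩ => ⟨hx.mul hy, by rw [mul_inv_rev]; exact hy'.mul hx'⟩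
  inv_mem' := fun ⟨hx, hx'⟩ => ⟨hx', by rwa [inv_inv]⟩

def constHom : T →* C.cauchySubgroup :=
  (Pi.constMonoidHom ℕ T).codRestrict _ fun s =>
    ⟨C.isLeftCauchy_const s, C.isLeftCauchy_const s⁻¹⟩

def tail (n : ℕ) : Set C.cauchySubgroup :=
  {x | ∀ᶠ p in atTop, (x : ℕ → T) p ∈ C.U n}

theorem tail_antitone : Antitone C.tail :=
  fun _ _ h _ hx => hx.mono fun _ hp => C.antitone h hp

@[reducible]
def tailBasis : GroupFilterBasis C.cauchySubgroup where
  sets := Set.range C.tail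
  nonempty := Set.range_nonempty _
  inter_sets := by
    rintro _ _ ⟨a, rfl⟩ ⟨b, rfl⟩
    exact ⟨C.tail (max a b), ⟨_, rfl⟩, Set.subset_inter (C.tail_antitone (le_max_left a b))
      (C.tail_antitone (le_max_right a b))⟩
  one' := by
    rintro _ ⟨n, rfl⟩
    exact Eventually.of_forall fun _ => C.one_mem n
  mul' := by
    rintro _ ⟨n, rfl⟩
    refine ⟨C.tail (n + 1), ⟨_, rfl⟩, ?_⟩
    rintro _ ⟨x, hx, y, hy, rfl⟩
    filter_upwards [hx, hy] with p using C.mul_mem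
  inv' := by
    rintro _ ⟨n, rfl⟩
    exact ⟨C.tail n, ⟨n, rfl⟩, fun x hx => hx.mono fun _ => C.inv_mem⟩
  conj' := by
    rintro x₀ _ ⟨n, rfl⟩
    obtain ⟨m, hm⟩ := x₀.2.2.eventually_conj_mem n
    refine ⟨C.tail m, ⟨m, rfl⟩, fun x hx => ?_⟩
    filter_upwards [hm, hx] with p hconj hxp
    simpa using hconj _ hxp

instance : TopologicalSpace C.cauchySubgroup := C.tailBasis.topology

instance : IsTopologicalGroup C.cauchySubgroup := C.tailBasis.isTopologicalGroup

theorem mem_closure_range_constHom (x : C.cauchySubgroup) :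
    x ∈ closure (Set.range C.constHom) := by
  refine (mem_closure_iff_nhds_basis (C.tailBasis.nhds_hasBasis x)).2 ?_
  rintro _ ⟨n, rfl⟩
  obtain ⟨N, hN⟩ := eventually_atTop_prod_self'.1 (x.2.1 n)
  refine ⟨C.constHom (x.1 N), ⟨_, rfl⟩, x⁻¹ * C.constHom (x.1 N), ?_, mul_inv_cancel_left _ _⟩
  exact eventually_atTop.2 ⟨N, fun p hp => hN p hp N le_rfl⟩

theorem inv_mul_mem_tail_of_inseparable {x y : C.cauchySubgroup} (h : Inseparable x y) (n : ℕ) :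
    x⁻¹ * y ∈ C.tail n := by
  obtain ⟨z, hz, rfl⟩ : y ∈ (x * ·) '' C.tail n :=
    mem_of_mem_nhds (h.nhds_eq ▸ (C.tailBasis.nhds_hasBasis x).mem_of_mem ⟨n, rfl⟩)
  rwa [inv_mul_cancel_left]

theorem inv_mul_mem_of_telescope {y : ℕ → T} {c : ℕ → ℕ} (hc : StrictMono c)
    (hy : ∀ k, (y k)⁻¹ * y (k + 1) ∈ C.U (c k + 1)) {j l : ℕ} (hjl : j ≤ l) :
    (y j)⁻¹ * y l ∈ C.U (c j) := by
  obtain ⟨d, rfl⟩ := Nat.exists_eq_add_of_le hjl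
  clear hjl
  induction d generalizing j with
  | zero => simpa using C.one_mem _
  | succ d ih =>
    have h := C.mul_mem (hy j) (C.antitone (hc (Nat.lt_succ_self j)) (ih (j := j + 1)))
    rwa [mul_assoc, mul_inv_cancel_left, add_right_comm] at h

theorem isLeftCauchy_of_telescope {y : ℕ → T} {c : ℕ → ℕ} (hc : StrictMono c)
    (hy : ∀ k, (y k)⁻¹ * y (k + 1) ∈ C.U (c k + 1)) : C.IsLeftCauchy y := by
  intro n
  refine eventually_atTop_prod_self'.2 ⟨n + 1, fun p hp q hq => ?_⟩
  have hN : n + 1 ≤ c (n + 1) := hc.id_le (n + 1)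
  have hp' := C.antitone hN (C.inv_mul_mem_of_telescope hc hy hp)
  have hq' := C.antitone hN (C.inv_mul_mem_of_telescope hc hy hq)
  simpa [mul_assoc] using C.mul_mem (C.inv_mem hp') hq'

theorem exists_close_separated (x s : T) (c : ℕ) : ∃ x' c', c < c' ∧ x⁻¹ * x' ∈ C.U (c + 1) ∧
    x * x'⁻¹ ∈ C.U (c + 1) ∧ x'⁻¹ * s ∉ C.U c' * C.U c' := by
  obtain ⟨x', hx's, hx'⟩ : ∃ x', x' ≠ s ∧ x⁻¹ * x' ∈ C.U (c + 1) ∧ x * x'⁻¹ ∈ C.U (c + 1) := by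
    by_cases hxs : x = s
    · obtain ⟨m, hm⟩ := C.conj_mem x (c + 1)
      obtain ⟨e, he, he1⟩ := C.exists_ne_one (max m (c + 1))
      refine ⟨x * e, by simpa [hxs] using he1, by simpa using C.antitone (le_max_right _ _) he,
        by simpa [mul_assoc] using hm _ (C.inv_mem (C.antitone (le_max_left _ _) he))⟩
    · exact ⟨x, hxs, by simpa using C.one_mem _, by simpa using C.one_mem _⟩
  obtain ⟨d, hd⟩ : ∃ d, x'⁻¹ * s ∉ C.U d := by
    by_contra! h
    exact hx's (inv_mul_eq_one.1 (C.eq_one_of_forall_mem h))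
  refine ⟨x', max c d + 1, Nat.lt_succ_of_le (le_max_left _ _), hx'.1, hx'.2, fun hmem => hd ?_⟩
  obtain ⟨y, hy, z, hz, hyz⟩ := hmem
  exact hyz ▸ C.antitone (le_max_right c d) (C.mul_mem hy hz)

theorem exists_mem_cauchySubgroup_not_tendsto [Countable T] :
    ∃ x ∈ C.cauchySubgroup, ∀ s : T, ∃ n, ¬ ∀ᶠ p in atTop, (x p)⁻¹ * s ∈ C.U n := by
  obtain ⟨g, hg⟩ := exists_surjective_nat T
  obtain ⟨xc, hxc⟩ := exists_seq_forall_rel (p := fun _ : T × ℕ => True)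
    (R := fun k a b => a.2 < b.2 ∧ a.1⁻¹ * b.1 ∈ C.U (a.2 + 1) ∧ a.1 * b.1⁻¹ ∈ C.U (a.2 + 1) ∧
      b.1⁻¹ * g k ∉ C.U b.2 * C.U b.2)
    ⟨(1, 0), trivial⟩ fun k a _ => by
      obtain ⟨x', c', h⟩ := C.exists_close_separated a.1 (g k) a.2
      exact ⟨(x', c'), trivial, h⟩
  simp only [forall_and] at hxc
  obtain ⟨-, hlt, hleft, hright, hfar⟩ := hxc
  have hc : StrictMono fun k => (xc k).2 := strictMono_nat_of_lt_succ hlt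
  refine ⟨fun k => (xc k).1, ⟨C.isLeftCauchy_of_telescope hc hleft,
    C.isLeftCauchy_of_telescope hc fun k => by simpa using hright k⟩, fun s => ?_⟩
  obtain ⟨k, rfl⟩ := hg s
  refine ⟨(xc (k + 1)).2, fun h => hfar k ?_⟩
  obtain ⟨p, hps, hp⟩ := (h.and (eventually_ge_atTop (k + 1))).exists
  have h := Set.mul_mem_mul (C.inv_mul_mem_of_telescope hc hleft hp) hps
  rwa [mul_assoc, mul_inv_cancel_left] at h

end NbhdChain

theorem NbhdChain.exists_not_isClosed_range {T : Type u} [Group T] [Countable T]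
    (C : NbhdChain T) :
    ∃ (H : Type u) (_ : Group H) (_ : TopologicalSpace H) (_ : IsTopologicalGroup H)
      (_ : T2Space H) (f : T →* H), ¬ IsClosed (Set.range f) := by
  obtain ⟨x, hx, hxs⟩ := C.exists_mem_cauchySubgroup_not_tendsto
  refine ⟨SeparationQuotient C.cauchySubgroup, inferInstance, inferInstance, inferInstance,
    inferInstance, SeparationQuotient.mkMonoidHom.comp C.constHom, fun hclosed => ?_⟩
  obtain ⟨s, hs⟩ : SeparationQuotient.mk ⟨x, hx⟩ ∈
      Set.range (SeparationQuotient.mkMonoidHom.comp C.constHom) := by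
    refine hclosed.closure_subset ?_
    rw [MonoidHom.coe_comp, Set.range_comp]
    exact mem_closure_image SeparationQuotient.continuous_mk.continuousAt
      (C.mem_closure_range_constHom _)
  obtain ⟨n, hn⟩ := hxs s
  exact hn (C.inv_mul_mem_tail_of_inseparable (SeparationQuotient.mk_eq_mk.1 hs).symm n)

section TopologicalGroup

variable {G : Type u} [Group G] [TopologicalSpace G] [IsTopologicalGroup G] [T1Space G]

theorem exists_nhds_one_step (g : ℕ → G) (n : ℕ) {W : Set G} (hW : W ∈ 𝓝 1) :
    ∃ V ∈ 𝓝 (1 : G), V⁻¹ = V ∧ V * V ⊆ W ∧ (∀ i ≤ n, ∀ x ∈ V, g i * x * (g i)⁻¹ ∈ W) ∧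
      (g n ≠ 1 → g n ∉ V) := by
  have hconj : ∀ᶠ x in 𝓝 (1 : G), ∀ i ∈ {i | i ≤ n}, g i * x * (g i)⁻¹ ∈ W :=
    (eventually_all_finite (Set.finite_le_nat n)).2 fun i _ =>
      ((continuous_const_mul (g i)).mul continuous_const).tendsto' 1 1 (by simp) hW
  have hsep : ∀ᶠ x in 𝓝 (1 : G), g n ≠ 1 → x ≠ g n := by
    by_cases h : g n = 1
    · simp [h]
    · filter_upwards [eventually_ne_nhds (Ne.symm h)] with x hx _ using hx
  obtain ⟨V, hV, -, hVinv, hVW⟩ :=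
    exists_closed_nhds_one_inv_eq_mul_subset (inter_mem hW (hconj.and hsep))
  have hV' : V ⊆ V * V := Set.subset_mul_left V (mem_of_mem_nhds hV)
  exact ⟨V, hV, hVinv, fun x hx => (hVW hx).1, fun i hi x hx => (hVW (hV' hx)).2.1 i hi,
    fun h hn => (hVW (hV' hn)).2.2 h rfl⟩

theorem Subgroup.nonempty_nbhdChain (S : Subgroup G) [Countable S]
    (hS : AccPt 1 (𝓟 (S : Set G))) : Nonempty (NbhdChain S) := by
  obtain ⟨g, hg⟩ := exists_surjective_nat S
  obtain ⟨V, hV⟩ := exists_seq_forall_rel (p := fun W : Set G => W ∈ 𝓝 1 ∧ W⁻¹ = W)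
    ⟨Set.univ, univ_mem, Set.inv_univ⟩ fun n W hW => by
      obtain ⟨V, hV, hVinv, h⟩ := exists_nhds_one_step (fun n => (g n : G)) n hW.1
      exact ⟨V, ⟨hV, hVinv⟩, h⟩
  have hanti : Antitone V := antitone_nat_of_succ_le fun n =>
    (Set.subset_mul_left _ (mem_of_mem_nhds (hV (n + 1)).1.1)).trans (hV n).2.1
  refine ⟨{ U := fun n => Subtype.val ⁻¹' V n, one_mem := ?_, inv_mem := ?_, mul_mem := ?_,
             conj_mem := ?_, eq_one_of_forall_mem := ?_, exists_ne_one := ?_ }⟩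
  · exact fun n => (mem_of_mem_nhds (hV n).1.1 : (1 : G) ∈ V n)
  · intro n x hx
    rw [Set.mem_preimage, Subgroup.coe_inv, ← Set.mem_inv, (hV n).1.2]
    exact hx
  · exact fun {n} _ _ hx hy => (hV n).2.1 (Set.mul_mem_mul hx hy)
  · intro s n
    obtain ⟨i, rfl⟩ := hg s
    exact ⟨max i n + 1, fun x hx =>
      hanti (le_max_right i n) ((hV (max i n)).2.2.1 i (le_max_left i n) x hx)⟩
  · intro s hs
    obtain ⟨i, rfl⟩ := hg s
    by_contra h
    exact (hV i).2.2.2 (by exact_mod_cast h) (hs (i + 1))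
  · intro n
    obtain ⟨y, ⟨hyV, hyS⟩, hy1⟩ := accPt_iff_nhds.1 hS (V n) (hV n).1.1
    exact ⟨⟨y, hyS⟩, hyV, fun h => hy1 (congrArg Subtype.val h)⟩

end TopologicalGroup

theorem anticompact_of_discrete_cCompact {G : Type u} [Group G]
    (hG : DiscreteHereditarilyHComplete.{u, u} G)
    (t : TopologicalSpace G) (htg : @IsTopologicalGroup G t _) (ht2 : @T2Space G t)
    (K : Set G) (hK : @IsCompact G t K) : K.Finite := by
  by_contra hinf
  obtain ⟨D, hDK, hDcount, hDinf⟩ := Set.Infinite.exists_subset_countable_infinite hinf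
  obtain ⟨a, -, ha⟩ := hDinf.exists_accPt_of_subset_isCompact hK hDK
  set S := Subgroup.closure (insert a D)
  have : Countable S := Subgroup.countable_closure (hDcount.insert a)
  have hS : AccPt 1 (𝓟 (S : Set G)) :=
    Subgroup.accPt_one_of_accPt (Subgroup.subset_closure (Set.mem_insert a D))
      (ha.mono (principal_mono.2 ((Set.subset_insert a D).trans Subgroup.subset_closure)))
  obtain ⟨C⟩ := S.nonempty_nbhdChain hS
  obtain ⟨H, _, _, _, _, f, hf⟩ := C.exists_not_isClosed_range
  exact hf (hG S H f)
end

section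
/- Let G be a Hausdorff topological group and N a filter-base of h-complete normal subgroups of G such that the natural (diagonal) homomorphism from G into the product of the quotients G/N over N in the filter-base is a topological embedding. If each quotient G/N is totally minimal, then G is totally minimal. -/
/-!
Let `f : G → H` be a continuous surjective homomorphism. For each `i`, h-completeness makes
`f (N i)` closed, so `f` induces a continuous surjection `G ⧸ N i → H ⧸ f (N i)` onto a Hausdorff
group, which is open by total minimality of `G ⧸ N i`. Consequently `f` maps every
`N i`-saturated neighbourhood of `1` onto a neighbourhood of `1`. Since the diagonal map is an
embedding and the `N i` form a filter-base, these saturated neighbourhoods form a base at `1`,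
so `f` is open.
-/

open Topology Filter QuotientGroup Pointwise

universe u v

/-- A Hausdorff topological group is h-complete if its image under every continuous
homomorphism into a Hausdorff topological group is closed. -/
def IsHComplete (G : Type u) [Group G] [TopologicalSpace G] : Prop :=
  ∀ (H : Type v) [Group H] [TopologicalSpace H] [IsTopologicalGroup H] [T2Space H]
    (f : G →* H), Continuous f → IsClosed (Set.range f)

/-- A Hausdorff topological group is totally minimal if every continuous surjective
homomorphism onto a Hausdorff topological group is open. -/
def IsTotallyMinimal (G : Type u) [Group G] [TopologicalSpace G] : Prop :=
  ∀ (H : Type v) [Group H] [TopologicalSpace H] [IsTopologicalGroup H] [T2Space H]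
    (f : G →* H), Continuous f → Function.Surjective f → IsOpenMap f

section Quotients

variable {G : Type u} [Group G] [TopologicalSpace G]

lemma nhds_one_eq_iInf_comap_mk {ι : Type*} (N : ι → Subgroup G) [∀ i, (N i).Normal]
    (h : IsInducing fun g : G => fun i => (g : G ⧸ N i)) :
    𝓝 (1 : G) = ⨅ i, comap (mk : G → G ⧸ N i) (𝓝 1) := by
  rw [h.nhds_eq_comap, nhds_pi, Filter.pi, comap_iInf]
  simp only [comap_comap]
  rfl

lemma comap_mk_nhds_one_mono {N M : Subgroup G} [N.Normal] [M.Normal]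
    (h : N ≤ M) : comap (mk : G → G ⧸ N) (𝓝 1) ≤ comap (mk : G → G ⧸ M) (𝓝 1) := by
  let φ : G ⧸ N →* G ⧸ M := QuotientGroup.map N M (MonoidHom.id G) h
  have hφ : Continuous φ := (isQuotientMap_mk N).continuous_iff.mpr continuous_mk
  calc comap (mk : G → G ⧸ N) (𝓝 1)
      ≤ comap (mk : G → G ⧸ N) (comap φ (𝓝 1)) :=
        comap_mono (hφ.tendsto' 1 1 (map_one φ)).le_comap
    _ = comap (mk : G → G ⧸ M) (𝓝 1) := by rw [comap_comap]; rfl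

lemma directed_comap_mk_nhds_one {ι : Type*} (N : ι → Subgroup G)
    [∀ i, (N i).Normal] (hbase : ∀ i j, ∃ k, N k ≤ N i ⊓ N j) :
    Directed (· ≥ ·) fun i => comap (mk : G → G ⧸ N i) (𝓝 1) := fun i j =>
  (hbase i j).imp fun _ hk =>
    ⟨comap_mk_nhds_one_mono (hk.trans inf_le_left), comap_mk_nhds_one_mono (hk.trans inf_le_right)⟩

end Quotients

section Image

variable {G : Type u} [Group G] {H : Type v} [Group H]

lemma image_preimage_mk_eq_preimage_image_map (f : G →* H) (N : Subgroup G) [N.Normal]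
    [(N.map f).Normal] (s : Set (G ⧸ N)) :
    f '' (mk ⁻¹' s) = mk ⁻¹' (QuotientGroup.map N (N.map f) f (N.le_comap_map f) '' s) := by
  have hsat : mk ⁻¹' s * (N : Set G) = mk ⁻¹' s := by
    rw [← preimage_image_mk_eq_mul, Set.image_preimage_eq s mk_surjective]
  calc f '' (mk ⁻¹' s) = f '' (mk ⁻¹' s * N) := by rw [hsat]
    _ = f '' (mk ⁻¹' s) * (N.map f : Set H) := by rw [Set.image_mul, Subgroup.coe_map]
    _ = mk ⁻¹' (mk '' (f '' (mk ⁻¹' s))) := (preimage_image_mk_eq_mul _ _).symm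
    _ = mk ⁻¹' (QuotientGroup.map N (N.map f) f (N.le_comap_map f) '' (mk '' (mk ⁻¹' s))) := by
      rw [← Set.image_comp, ← Set.image_comp]; rfl
    _ = mk ⁻¹' (QuotientGroup.map N (N.map f) f (N.le_comap_map f) '' s) := by
      rw [Set.image_preimage_eq s mk_surjective]

variable [TopologicalSpace G] [TopologicalSpace H] [IsTopologicalGroup H] [T2Space H]

lemma IsHComplete.isClosed_map {N : Subgroup G} (hN : IsHComplete.{u, v} N) {f : G →* H}
    (hf : Continuous f) : IsClosed (N.map f : Set H) := by
  simpa [Set.range_comp, Subgroup.coe_map] using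
    hN H (f.comp N.subtype) (hf.comp continuous_subtype_val)

lemma nhds_one_le_map_comap_mk {N : Subgroup G} [N.Normal]
    (hN : IsHComplete.{u, v} N) (hq : IsTotallyMinimal.{u, v} (G ⧸ N)) {f : G →* H}
    (hf : Continuous f) (hsurj : Function.Surjective f) :
    𝓝 1 ≤ map f (comap (mk : G → G ⧸ N) (𝓝 1)) := by
  have : (N.map f).Normal := .map inferInstance f hsurj
  have : IsClosed (N.map f : Set H) := hN.isClosed_map hf
  let ψ : G ⧸ N →* H ⧸ N.map f := QuotientGroup.map N (N.map f) f (N.le_comap_map f)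
  have hψc : Continuous ψ := (isQuotientMap_mk N).continuous_iff.mpr (continuous_mk.comp hf)
  have hψs : Function.Surjective ψ :=
    (show Function.Surjective (ψ ∘ mk) from mk_surjective.comp hsurj).of_comp
  have hψo : IsOpenMap ψ := hq _ ψ hψc hψs
  refine le_map_iff.mpr fun s hs => ?_
  obtain ⟨t, ht, hts⟩ := mem_comap.mp hs
  refine mem_of_superset ?_ (Set.image_mono hts)
  rw [image_preimage_mk_eq_preimage_image_map]
  exact continuous_mk.tendsto' 1 1 rfl (map_one ψ ▸ hψo.image_mem_nhds ht)

end Image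

theorem totallyMinimal_of_subdirect_general {G : Type u}
    [Group G] [TopologicalSpace G] [IsTopologicalGroup G]
    {ι : Type u} [Nonempty ι] (N : ι → Subgroup G) [∀ i, (N i).Normal]
    -- the family is a filter-base
    (hbase : ∀ i j : ι, ∃ k : ι, N k ≤ N i ⊓ N j)
    -- each member is h-complete (as a topological subgroup of `G`)
    (hcomp : ∀ i, IsHComplete.{u, u} (N i))
    -- the natural diagonal homomorphism into the product of the quotients is a
    -- topological embedding
    (hemb : Topology.IsEmbedding (fun g : G => fun i : ι => ((QuotientGroup.mk g : G ⧸ N i))))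
    -- each quotient is totally minimal
    (htm : ∀ i, IsTotallyMinimal.{u, u} (G ⧸ N i)) :
    IsTotallyMinimal.{u, u} G := by
  intro H _ _ _ _ f hf hsurj
  rw [IsTopologicalGroup.isOpenMap_iff_nhds_one, nhds_one_eq_iInf_comap_mk N hemb.isInducing,
    map_iInf_eq (directed_comap_mk_nhds_one N hbase)]
  exact le_iInf fun i => nhds_one_le_map_comap_mk (hcomp i) (htm i) hf hsurj

theorem totallyMinimal_of_subdirect {G : Type u}
    [Group G] [TopologicalSpace G] [IsTopologicalGroup G] [T2Space G]
    {ι : Type u} [Nonempty ι] (N : ι → Subgroup G) [∀ i, (N i).Normal]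
    -- the family is a filter-base
    (hbase : ∀ i j : ι, ∃ k : ι, N k ≤ N i ⊓ N j)
    -- each member is h-complete (as a topological subgroup of `G`)
    (hcomp : ∀ i, IsHComplete.{u, u} (N i))
    -- the natural diagonal homomorphism into the product of the quotients is a
    -- topological embedding
    (hemb : Topology.IsEmbedding (fun g : G => fun i : ι => ((QuotientGroup.mk g : G ⧸ N i))))
    -- each quotient is totally minimal
    (htm : ∀ i, IsTotallyMinimal.{u, u} (G ⧸ N i)) :
    IsTotallyMinimal.{u, u} G :=
  totallyMinimal_of_subdirect_general N hbase hcomp hemb htm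
end

section
/- Let G be a locally compact SIN Hausdorff topological group such that every closed subgroup of G is totally minimal. Then G is hereditarily h-complete. -/
universe u v

/-- A Hausdorff topological group is hereditarily h-complete if every closed
subgroup of it is h-complete. -/
def IsHereditarilyHComplete (G : Type u) [Group G] [TopologicalSpace G] : Prop :=
  ∀ S : Subgroup G, IsClosed (S : Set G) → IsHComplete.{u, v} S

/-- A topological group is SIN if every identity neighborhood contains an identity
neighborhood invariant under all conjugations. -/
def IsSIN (G : Type*) [Group G] [TopologicalSpace G] : Prop :=
  ∀ U ∈ nhds (1 : G), ∃ V ∈ nhds (1 : G), V ⊆ U ∧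
    ∀ g : G, (fun x => g * x * g⁻¹) '' V = V

/-!
By total minimality, a continuous homomorphism `f` on a closed subgroup `S` is open onto its
image, so `f(S)` is a quotient of the locally compact group `S` and is itself locally compact.
A locally compact subspace of a Hausdorff space is locally closed, and a locally closed subgroup
is open, hence closed, in its closure; so `f(S)` is closed.
-/

open Set Topology

theorem isLocallyClosed_of_weaklyLocallyCompactSpace {X : Type*} [TopologicalSpace X]
    [T2Space X] (s : Set X) [WeaklyLocallyCompactSpace s] : IsLocallyClosed s := by
  refine ((isLocallyClosed_tfae s).out 0 3).mpr fun x hx => ?_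
  obtain ⟨K, hK, hKx⟩ := exists_compact_mem_nhds (⟨x, hx⟩ : s)
  have hK' : IsClosed ((↑) '' K : Set X) := (hK.image continuous_subtype_val).isClosed
  obtain ⟨U, hUo, hxU, hUs⟩ := mem_nhdsWithin.mp (mem_nhds_subtype_iff_nhdsWithin.mp hKx)
  refine ⟨U, hxU, hUo, ?_⟩
  calc U ∩ closure s ⊆ closure (U ∩ s) := hUo.inter_closure
    _ ⊆ (↑) '' K := closure_minimal hUs hK'
    _ ⊆ s := image_subset_iff.mpr fun y _ => y.2

theorem Subgroup.isClosed_of_isLocallyClosed {G : Type*} [Group G] [TopologicalSpace G]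
    [IsTopologicalGroup G] {K : Subgroup G} (hK : IsLocallyClosed (K : Set G)) :
    IsClosed (K : Set G) := by
  have hopen : IsOpen (K.subgroupOf K.topologicalClosure : Set K.topologicalClosure) :=
    hK.isOpen_preimage_val_closure
  have hclosed : IsClosed (((↑) : K.topologicalClosure → G) ''
      (K.subgroupOf K.topologicalClosure : Set K.topologicalClosure)) :=
    K.isClosed_topologicalClosure.isClosedEmbedding_subtypeVal.isClosedMap _
      ((K.subgroupOf K.topologicalClosure).isClosed_of_isOpen hopen)
  rwa [coe_subgroupOf, coe_subtype, image_preimage_eq_inter_range, Subtype.range_coe_subtype,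
    SetLike.setOfPred_mem_eq, inter_eq_left.mpr K.le_topologicalClosure] at hclosed

theorem MonoidHom.isClosed_range_of_isOpenMap_rangeRestrict {G H : Type*} [Group G]
    [TopologicalSpace G] [LocallyCompactSpace G] [Group H] [TopologicalSpace H]
    [IsTopologicalGroup H] [T2Space H] (f : G →* H) (hf : Continuous f)
    (hopen : IsOpenMap f.rangeRestrict) : IsClosed (Set.range f) := by
  have : LocallyCompactSpace f.range :=
    IsOpenQuotientMap.locallyCompactSpace ⟨f.rangeRestrict_surjective, hf.subtype_mk _, hopen⟩
  rw [← coe_range]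
  exact Subgroup.isClosed_of_isLocallyClosed (isLocallyClosed_of_weaklyLocallyCompactSpace _)

theorem hereditarilyHComplete_of_LC_SIN_general {G : Type u}
    [Group G] [TopologicalSpace G] [IsTopologicalGroup G] [T2Space G]
    [LocallyCompactSpace G]
    (htm : ∀ S : Subgroup G, IsClosed (S : Set G) → IsTotallyMinimal.{u, u} S) :
    IsHereditarilyHComplete.{u, u} G := by
  intro S hS H _ _ _ _ f hf
  have : LocallyCompactSpace S := hS.locallyCompactSpace
  exact f.isClosed_range_of_isOpenMap_rangeRestrict hf
    (htm S hS f.range f.rangeRestrict (hf.subtype_mk _) f.rangeRestrict_surjective)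

theorem hereditarilyHComplete_of_LC_SIN {G : Type u}
    [Group G] [TopologicalSpace G] [IsTopologicalGroup G] [T2Space G]
    [LocallyCompactSpace G] (hsin : IsSIN G)
    (htm : ∀ S : Subgroup G, IsClosed (S : Set G) → IsTotallyMinimal.{u, u} S) :
    IsHereditarilyHComplete.{u, u} G :=
  hereditarilyHComplete_of_LC_SIN_general htm
end

section
/- Let G be a discrete group all of whose subgroups are totally minimal (as discrete groups, i.e., every Hausdorff group topology on any quotient of any subgroup making the quotient map continuous is discrete) and which is maximally almost periodic. Then G is finite. -/
/-! Apply total minimality to the subgroup `G` itself and the corestriction of an injective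
homomorphism `m : G →* K` into a compact group onto its image: the image is then discrete. A
discrete subgroup of a Hausdorff group is closed, hence compact in `K`, hence finite, and `G`
is isomorphic to it. -/

universe u v

open Function

theorem discreteTopology_of_isOpenMap_of_surjective {X Y : Type*} [TopologicalSpace X]
    [DiscreteTopology X] [TopologicalSpace Y] {f : X → Y} (hf : IsOpenMap f)
    (hsurj : Surjective f) : DiscreteTopology Y :=
  isDiscrete_univ_iff.mp (hsurj.range_eq ▸ hf.isDiscrete_range)

theorem Subgroup.finite_of_discreteTopology {K : Type*} [Group K] [TopologicalSpace K]
    [IsTopologicalGroup K] [CompactSpace K] [T2Space K] (H : Subgroup K) [DiscreteTopology H] :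
    Finite H :=
  have : CompactSpace H := isCompact_iff_compactSpace.mp Subgroup.isClosed_of_discrete.isCompact
  finite_of_compact_of_discrete

theorem finite_of_totallyMinimal_MAP {G : Type u} [Group G]
    -- every subgroup of `G` is totally minimal as a discrete group: every surjective
    -- homomorphism from it onto a Hausdorff topological group is an open map of the
    -- discrete topology
    (htm : ∀ (S : Subgroup G) (H : Type u) [Group H] [TopologicalSpace H]
      [IsTopologicalGroup H] [T2Space H] (f : S →* H), Function.Surjective f →
      @IsOpenMap S H ⊥ _ f)
    -- `G` is maximally almost periodic: it admits an injective homomorphism into a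
    -- compact Hausdorff topological group
    (hmap : ∃ (K : Type u) (_ : Group K) (_ : TopologicalSpace K)
      (_ : IsTopologicalGroup K) (_ : CompactSpace K) (_ : T2Space K)
      (m : G →* K), Function.Injective m) :
    Finite G := by
  obtain ⟨K, _, _, _, _, _, m, hm⟩ := hmap
  let f : (⊤ : Subgroup G) →* m.range := m.rangeRestrict.comp Subgroup.topEquiv.toMonoidHom
  have hf : Surjective f := m.rangeRestrict_surjective.comp Subgroup.topEquiv.surjective
  let _ : TopologicalSpace (⊤ : Subgroup G) := ⊥
  have : DiscreteTopology (⊤ : Subgroup G) := ⟨rfl⟩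
  have : DiscreteTopology m.range :=
    discreteTopology_of_isOpenMap_of_surjective (htm ⊤ _ f hf) hf
  have : Finite m.range := m.range.finite_of_discreteTopology
  exact Finite.of_injective _ (m.rangeRestrict_injective_iff.mpr hm)
end

section
/- Suppose every countable discrete hereditarily h-complete group is finite. Then every locally compact totally disconnected SIN hereditarily h-complete Hausdorff topological group G in which closed separable subgroups are profinite-representable is compact. -/
universe u v

/-- The canonical (bonding) map `G ⧸ N → G ⧸ M` for subgroups `N ≤ M`. -/
def quotMap {G : Type u} [Group G] {N M : Subgroup G} (h : N ≤ M) : G ⧸ N → G ⧸ M :=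
  Quotient.map' id (fun a b hab => by
    rw [QuotientGroup.leftRel_apply] at hab ⊢
    exact h hab)

/-- The index set of the quotients of `G` by compact open normal subgroups. -/
def CompactOpenNormalIndex (G : Type u) [Group G] [TopologicalSpace G] : Type u :=
  {N : Subgroup G // N.Normal ∧ IsCompact (N : Set G) ∧ IsOpen (N : Set G)}

/-- A topological group is profinite-representable if the natural diagonal map onto
the projective limit of its (discrete) quotients by compact open normal subgroups is
a topological isomorphism. -/
def ProfiniteRepresentable (S : Type u) [Group S] [TopologicalSpace S] : Prop :=
  ∃ e : S ≃ₜ {x : ∀ N : CompactOpenNormalIndex S, S ⧸ N.1 //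
      ∀ (N M : CompactOpenNormalIndex S) (h : N.1 ≤ M.1), quotMap h (x N) = x M},
    ∀ (s : S) (N : CompactOpenNormalIndex S), (e s).1 N = QuotientGroup.mk s



/-- van Dantzig: a locally compact totally disconnected Hausdorff group has a
compact open subgroup. -/
theorem exists_compact_open_subgroup (G : Type u) [Group G] [TopologicalSpace G]
    [IsTopologicalGroup G] [T2Space G] [LocallyCompactSpace G] [TotallyDisconnectedSpace G] :
    ∃ K : Subgroup G, IsCompact (K : Set G) ∧ IsOpen (K : Set G) := by
  obtain ⟨C, hCc, hCn⟩ := exists_compact_mem_nhds (1 : G)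
  obtain ⟨V, hVclopen, hV1, hVC⟩ :=
    (loc_compact_Haus_tot_disc_of_zero_dim (H := G)).mem_nhds_iff.1 hCn
  have hVc : IsCompact V := hCc.of_isClosed_subset hVclopen.1 hVC
  obtain ⟨W, hW1, hWmul⟩ := compact_open_separated_mul_right hVc hVclopen.2 subset_rfl
  set s : Set G := W ∩ W⁻¹ with hs
  have hs_symm : s⁻¹ = s := by
    simp [hs, Set.inter_inv, Set.inter_comm]
  have hs_nhds : s ∈ nhds (1 : G) := by
    exact Filter.inter_mem hW1 (by simpa using inv_mem_nhds_one G hW1)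
  have hsW : s ⊆ W := Set.inter_subset_left
  set K : Subgroup G := Subgroup.closure s with hK
  have hKopen : IsOpen (K : Set G) :=
    Subgroup.isOpen_of_mem_nhds K (Filter.mem_of_superset hs_nhds Subgroup.subset_closure)
  have hKV : (K : Set G) ⊆ V := by
    intro x hx
    have hx' : x ∈ Submonoid.closure (s ∪ s⁻¹) := by
      rw [← Subgroup.closure_toSubmonoid]; exact hx
    obtain ⟨l, hl, rfl⟩ := Submonoid.exists_list_of_mem_closure hx'
    have hl' : ∀ y ∈ l, y ∈ W := by
      intro y hy
      rcases hl y hy with h | h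
      · exact hsW h
      · rw [hs_symm] at h; exact hsW h
    clear hl hx hx'
    induction l using List.reverseRecOn with
    | nil => simpa using hV1
    | append_singleton t w ih =>
        rw [List.prod_append, List.prod_singleton]
        exact hWmul (Set.mul_mem_mul (ih (fun y hy => hl' y (by simp [hy])))
          (hl' w (by simp)))
  have hKcompact : IsCompact (K : Set G) :=
    hVc.of_isClosed_subset (K.isClosed_of_isOpen hKopen) hKV
  exact ⟨K, hKcompact, hKopen⟩


theorem countable_subgroup_closure {G : Type u} [Group G] {A : Set G} (hA : A.Countable) :
    ((Subgroup.closure A : Subgroup G) : Set G).Countable := by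
  have hs : (A ∪ A⁻¹).Countable := hA.union (hA.preimage (inv_injective))
  have : Countable ↥(A ∪ A⁻¹) := hs.to_subtype
  have key : ((Subgroup.closure A : Subgroup G) : Set G) ⊆
      Set.range (fun l : List ↥(A ∪ A⁻¹) => (l.map Subtype.val).prod) := by
    intro x hx
    have hx' : x ∈ Submonoid.closure (A ∪ A⁻¹) := by
      rw [← Subgroup.closure_toSubmonoid]; exact hx
    obtain ⟨l, hl, rfl⟩ := Submonoid.exists_list_of_mem_closure hx'
    refine ⟨l.attach.map (fun y => ⟨y.1, hl y.1 y.2⟩), ?_⟩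
    simp [List.map_map, Function.comp]
  exact (Set.countable_range _).mono key


theorem countable_quotient_of_separable {S : Type u} [Group S] [TopologicalSpace S]
    [IsTopologicalGroup S] [TopologicalSpace.SeparableSpace S] (N : Subgroup S)
    (hN : IsOpen (N : Set S)) : Countable (S ⧸ N) := by
  have hd : DiscreteTopology (S ⧸ N) := QuotientGroup.discreteTopology hN
  obtain ⟨u, ucount, udense⟩ := TopologicalSpace.exists_countable_dense S
  have : Countable u := ucount.to_subtype
  have hdr : DenseRange (fun x : u => (QuotientGroup.mk x.1 : S ⧸ N)) := by
    have h1 : DenseRange (Subtype.val : u → S) := udense.denseRange_val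
    have h2 : DenseRange (QuotientGroup.mk : S → S ⧸ N) :=
      (QuotientGroup.mk_surjective).denseRange
    exact h2.comp h1 continuous_quot_mk
  have hsurj : Function.Surjective (fun x : u => (QuotientGroup.mk x.1 : S ⧸ N)) := by
    intro q
    have : q ∈ closure (Set.range (fun x : u => (QuotientGroup.mk x.1 : S ⧸ N))) := hdr q
    rwa [IsClosed.closure_eq (isClosed_discrete _)] at this
  exact hsurj.countable

theorem compactSpace_of_separable_closed
    (hfin : ∀ (D : Type u) [Group D], Countable D →
      DiscreteHereditarilyHComplete.{u, u} D → Finite D)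
    {G : Type u} [Group G] [TopologicalSpace G] [IsTopologicalGroup G] [T2Space G]
    (hhc : IsHereditarilyHComplete.{u, u} G)
    (Sg : Subgroup G) (hcl : IsClosed (Sg : Set G))
    (hsep : TopologicalSpace.SeparableSpace Sg)
    (hpr : ProfiniteRepresentable Sg) : CompactSpace Sg := by
  obtain ⟨e, -⟩ := hpr
  -- each quotient by a compact open normal subgroup is finite
  have hfinq : ∀ N : CompactOpenNormalIndex Sg, Finite (Sg ⧸ N.1) := by
    intro N
    have hNopen : IsOpen (N.1 : Set Sg) := N.2.2.2
    have hd : DiscreteTopology (Sg ⧸ N.1) := QuotientGroup.discreteTopology hNopen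
    haveI hNn : N.1.Normal := N.2.1
    have hcount : Countable (Sg ⧸ N.1) := countable_quotient_of_separable N.1 hNopen
    refine hfin (Sg ⧸ N.1) hcount ?_
    -- discrete hereditary h-completeness of the quotient
    intro T H _ _ _ _ f
    set π : Sg →* Sg ⧸ N.1 := QuotientGroup.mk' N.1 with hπ
    set T₁ : Subgroup ↥Sg := T.comap π with hT₁
    set T₂ : Subgroup G := T₁.map Sg.subtype with hT₂
    have hT1closed : IsClosed (T₁ : Set ↥Sg) := by
      have : (T₁ : Set ↥Sg) = π ⁻¹' (T : Set (Sg ⧸ N.1)) := rfl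
      rw [this]
      exact (isClosed_discrete (T : Set (Sg ⧸ N.1))).preimage continuous_quot_mk
    have hT2closed : IsClosed (T₂ : Set G) := by
      have h := hcl.isClosedEmbedding_subtypeVal.isClosedMap _ hT1closed
      have heq : (Subtype.val '' (T₁ : Set ↥Sg)) = (T₂ : Set G) := by
        rw [hT₂]; rfl
      exact heq ▸ h
    have hmem : ∀ x : ↥T₂, (x : G) ∈ Sg := by
      rintro ⟨x, hx⟩
      obtain ⟨a, -, rfl⟩ := hx
      exact a.2
    let ι : ↥T₂ →* ↥Sg :=
      { toFun := fun x => ⟨x.1, hmem x⟩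
        map_one' := rfl
        map_mul' := fun a b => rfl }
    have hιT₁ : ∀ x : ↥T₂, ι x ∈ T₁ := by
      rintro ⟨x, hx⟩
      obtain ⟨a, ha, rfl⟩ := hx
      have : ι ⟨Sg.subtype a, ⟨a, ha, rfl⟩⟩ = a := Subtype.ext rfl
      rwa [this]
    let j : ↥T₂ →* ↥T := ((π.comp ι).codRestrict T (fun x => hιT₁ x))
    have hjcont : Continuous j := by
      refine Continuous.subtype_mk ?_ _
      exact continuous_quot_mk.comp
        ((continuous_subtype_val (p := (· ∈ T₂))).subtype_mk _)
    have hjsurj : Function.Surjective j := by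
      intro t
      obtain ⟨s, hs⟩ := QuotientGroup.mk'_surjective N.1 t.1
      have hsT₁ : s ∈ T₁ := by
        show π s ∈ T
        rw [hs]; exact t.2
      have hx : (s : G) ∈ T₂ := Subgroup.mem_map.2 ⟨s, hsT₁, rfl⟩
      refine ⟨⟨s.1, hx⟩, Subtype.ext ?_⟩
      show π (ι ⟨s.1, hx⟩) = t.1
      have hιs : ι ⟨s.1, hx⟩ = s := Subtype.ext rfl
      rw [hιs, hs]
    have hfc : Continuous f := continuous_of_discreteTopology
    have hkey := hhc T₂ hT2closed H (f.comp j) (hfc.comp hjcont)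
    have : Set.range (f.comp j) = Set.range f := by
      rw [MonoidHom.coe_comp]
      exact hjsurj.range_comp f
    rwa [this] at hkey
  -- now the projective limit is compact
  set P : Set (∀ N : CompactOpenNormalIndex Sg, Sg ⧸ N.1) :=
    {x | ∀ (N M : CompactOpenNormalIndex Sg) (h : N.1 ≤ M.1), quotMap h (x N) = x M} with hP
  have hPclosed : IsClosed P := by
    have : P = ⋂ (N : CompactOpenNormalIndex Sg) (M : CompactOpenNormalIndex Sg)
        (h : N.1 ≤ M.1), {x : ∀ N : CompactOpenNormalIndex Sg, Sg ⧸ N.1 |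
          quotMap h (x N) = x M} := by
      ext x
      simp only [hP, Set.mem_setOf_eq, Set.mem_iInter]
    rw [this]
    refine isClosed_iInter fun N => isClosed_iInter fun M => isClosed_iInter fun h => ?_
    haveI : DiscreteTopology (Sg ⧸ N.1) := QuotientGroup.discreteTopology N.2.2.2
    haveI : DiscreteTopology (Sg ⧸ M.1) := QuotientGroup.discreteTopology M.2.2.2
    haveI : T2Space (Sg ⧸ M.1) := DiscreteTopology.toT2Space
    exact isClosed_eq ((continuous_of_discreteTopology (f := quotMap h)).comp
      (continuous_apply N)) (continuous_apply M)
  haveI : CompactSpace (∀ N : CompactOpenNormalIndex Sg, Sg ⧸ N.1) := by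
    haveI : ∀ N : CompactOpenNormalIndex Sg, CompactSpace (Sg ⧸ N.1) :=
      fun N => @Finite.compactSpace _ _ (hfinq N)
    infer_instance
  haveI : CompactSpace {x : ∀ N : CompactOpenNormalIndex Sg, Sg ⧸ N.1 //
      ∀ (N M : CompactOpenNormalIndex Sg) (h : N.1 ≤ M.1), quotMap h (x N) = x M} :=
    isCompact_iff_compactSpace.1 hPclosed.isCompact
  exact e.symm.compactSpace


open scoped Pointwise

theorem compact_of_LC_TD_SIN_hhc
    -- hypothesis: every countable discrete hereditarily h-complete group is finite
    (hfin : ∀ (D : Type u) [Group D], Countable D →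
      DiscreteHereditarilyHComplete.{u, u} D → Finite D)
    {G : Type u} [Group G] [TopologicalSpace G] [IsTopologicalGroup G] [T2Space G]
    [LocallyCompactSpace G] [TotallyDisconnectedSpace G]
    (hsin : IsSIN G) (hhc : IsHereditarilyHComplete.{u, u} G)
    -- closed separable subgroups of `G` are profinite-representable
    (hrep : ∀ S : Subgroup G, IsClosed (S : Set G) →
      TopologicalSpace.SeparableSpace S → ProfiniteRepresentable S) :
    -- every closed separable subgroup of `G` is compact, and `G` itself is compact
    (∀ S : Subgroup G, IsClosed (S : Set G) → TopologicalSpace.SeparableSpace S →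
      IsCompact (S : Set G))
    ∧ CompactSpace G := by
  have part1 : ∀ S : Subgroup G, IsClosed (S : Set G) →
      TopologicalSpace.SeparableSpace S → IsCompact (S : Set G) := by
    intro S hS hsep
    have := compactSpace_of_separable_closed hfin hhc S hS hsep (hrep S hS hsep)
    exact isCompact_iff_compactSpace.2 this
  refine ⟨part1, ?_⟩
  obtain ⟨K, hKc, hKo⟩ := exists_compact_open_subgroup G
  have hfinidx : Finite (G ⧸ K) := by
    by_contra hinf
    rw [not_finite_iff_infinite] at hinf
    set emb := hinf.natEmbedding with hemb
    set g : ℕ → G := fun n => Quotient.out (emb n) with hg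
    set A : Set G := Set.range g with hA
    set Sg : Subgroup G := (Subgroup.closure A).topologicalClosure with hSg
    have hclosed : IsClosed (Sg : Set G) := Subgroup.isClosed_topologicalClosure _
    have hle : Subgroup.closure A ≤ Sg := Subgroup.le_topologicalClosure _
    have hAS : ∀ n, g n ∈ Sg := fun n => hle (Subgroup.subset_closure ⟨n, rfl⟩)
    have hcnt : ((Subgroup.closure A : Subgroup G) : Set G).Countable :=
      countable_subgroup_closure (Set.countable_range g)
    have hsep : TopologicalSpace.SeparableSpace ↥Sg := by
      refine ⟨⟨Subtype.val ⁻¹' ((Subgroup.closure A : Subgroup G) : Set G),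
        hcnt.preimage Subtype.val_injective, fun x => ?_⟩⟩
      rw [closure_subtype]
      have himg : ((Subtype.val : ↥Sg → G) '' ((Subtype.val : ↥Sg → G) ⁻¹'
          ((Subgroup.closure A : Subgroup G) : Set G)) : Set G)
          = ((Subgroup.closure A : Subgroup G) : Set G) := by
        ext y
        constructor
        · rintro ⟨z, hz, rfl⟩; exact hz
        · intro hy; exact ⟨⟨y, hle hy⟩, hy, rfl⟩
      rw [himg]
      exact x.2
    have hScompact : IsCompact (Sg : Set G) := part1 Sg hclosed hsep
    haveI : CompactSpace ↥Sg := isCompact_iff_compactSpace.1 hScompact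
    set K' : Subgroup ↥Sg := K.subgroupOf Sg with hK'
    have hK'open : IsOpen (K' : Set ↥Sg) := Subgroup.subgroupOf_isOpen Sg K hKo
    haveI hqfin : Finite (↥Sg ⧸ K') := K'.quotient_finite_of_isOpen hK'open
    set F : ℕ → ↥Sg ⧸ K' := fun n => QuotientGroup.mk ⟨g n, hAS n⟩ with hF
    have hFinj : Function.Injective F := by
      intro n m hnm
      have h1 : (⟨g n, hAS n⟩ : ↥Sg)⁻¹ * ⟨g m, hAS m⟩ ∈ K' := (QuotientGroup.eq).1 hnm
      have h2 : (g n)⁻¹ * g m ∈ K := h1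
      have h3 : (QuotientGroup.mk (g n) : G ⧸ K) = QuotientGroup.mk (g m) :=
        (QuotientGroup.eq).2 h2
      have h4 : emb n = emb m := by
        rw [← Quotient.out_eq' (emb n), ← Quotient.out_eq' (emb m)]
        exact h3
      exact emb.injective h4
    haveI := Finite.of_injective F hFinj
    exact not_finite ℕ
  have huniv : (Set.univ : Set G) = ⋃ q : G ⧸ K, (Quotient.out q) • (K : Set G) := by
    refine Set.eq_of_subset_of_subset (fun x _ => ?_) (fun x _ => Set.mem_univ x)
    refine Set.mem_iUnion.2 ⟨QuotientGroup.mk x, ?_⟩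
    rw [mem_leftCoset_iff]
    exact (QuotientGroup.eq).1 (Quotient.out_eq' (QuotientGroup.mk x : G ⧸ K))
  refine ⟨?_⟩
  rw [huniv]
  exact isCompact_iUnion fun q => hKc.smul _
end

section
/- If a Hausdorff topological group G contains a compact normal subgroup N such that G/N is totally minimal, then G is totally minimal. -/
universe u v

/-!
Let `f : G → H` be a continuous surjective homomorphism and `K = f(N)`, a compact normal subgroup
of `H`. The induced map `G/N → H/K` is open by assumption, so `f` maps `N`-saturated open sets to
open sets. Since `N` is compact, `f` restricted to `N` is open onto `K` near `1`. Given a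
neighbourhood `V` of `1` with `V V ⊆ U`, a point `f(n v)` of the open set `f(N V)` close to `1`
has `f(n)` close to `1` in `K`, hence `f(n) = f(n')` with `n' ∈ V`, and
`f(n v) = f(n' v) ∈ f(V V) ⊆ f(U)`.
-/

open Filter Set Topology
open scoped Pointwise

section

variable {G H : Type*} [Group G] [Group H]

theorem image_mul_subgroup_eq_preimage_map (f : G →* H) (N : Subgroup G) [N.Normal]
    [(N.map f).Normal] (V : Set G) :
    f '' (V * N) = ((↑) : H → H ⧸ N.map f) ⁻¹'
      (QuotientGroup.map N (N.map f) f (N.le_comap_map f) '' ((↑) '' V)) := by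
  ext x
  constructor
  · rintro ⟨_, ⟨v, hv, n, hn, rfl⟩, rfl⟩
    refine ⟨v, mem_image_of_mem _ hv, ?_⟩
    change ((f v : H) : H ⧸ N.map f) = f (v * n)
    rw [QuotientGroup.eq, ← map_inv, ← map_mul, inv_mul_cancel_left]
    exact Subgroup.mem_map_of_mem f hn
  · rintro ⟨_, ⟨v, hv, rfl⟩, hx⟩
    obtain ⟨n, hn, hfn⟩ := Subgroup.mem_map.1 (QuotientGroup.eq.1 hx)
    exact ⟨v * n, mul_mem_mul hv hn, by rw [map_mul, hfn, mul_inv_cancel_left]⟩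

variable [TopologicalSpace G] [TopologicalSpace H]

theorem QuotientGroup.continuous_map (N : Subgroup G) [N.Normal] (M : Subgroup H) [M.Normal]
    (f : G →* H) (hf : Continuous f) (hNM : N ≤ M.comap f) :
    Continuous (QuotientGroup.map N M f hNM) :=
  (QuotientGroup.isQuotientMap_mk N).continuous_iff.2 (QuotientGroup.continuous_mk.comp hf)

variable [IsTopologicalGroup G]

theorem isOpen_image_subgroup_mul_of_isOpenMap_map (f : G →* H) (N : Subgroup G) [N.Normal]
    [(N.map f).Normal] (hf : IsOpenMap (QuotientGroup.map N (N.map f) f (N.le_comap_map f)))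
    {V : Set G} (hV : IsOpen V) : IsOpen (f '' (N * V)) := by
  rw [← Subgroup.set_mul_normal_comm, image_mul_subgroup_eq_preimage_map]
  exact (hf _ (QuotientGroup.isOpenMap_coe V hV)).preimage QuotientGroup.continuous_mk

variable [T2Space H]

theorem image_inter_mem_nhdsWithin_image_of_isCompact {f : G →* H} (hf : Continuous f)
    {N : Subgroup G} (hN : IsCompact (N : Set G)) {V : Set G} (hV : V ∈ 𝓝 1) :
    f '' (N ∩ V) ∈ 𝓝[f '' N] 1 := by
  obtain ⟨W, hWV, hW, hW1⟩ := mem_nhds_iff.1 hV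
  set D : Set G := W * (N ⊓ f.ker : Subgroup G)
  have hD : IsOpen D := hW.mul_right
  have h1 : (1 : H) ∉ f '' (N \ D) := by
    rintro ⟨n, ⟨hnN, hnD⟩, hfn⟩
    exact hnD ⟨1, hW1, n, ⟨hnN, hfn⟩, one_mul n⟩
  refine mem_nhdsWithin_iff_exists_mem_nhds_inter.2
    ⟨_, ((hN.diff hD).image hf).isClosed.isOpen_compl.mem_nhds h1, ?_⟩
  rintro _ ⟨hC, n, hnN, rfl⟩
  have hnD : n ∈ D := by_contra fun hnD ↦ hC ⟨n, ⟨hnN, hnD⟩, rfl⟩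
  obtain ⟨w, hw, k, ⟨hkN, hk⟩, rfl⟩ := hnD
  have hwN : w ∈ N := by simpa using N.mul_mem hnN (N.inv_mem hkN)
  exact ⟨w, ⟨hwN, hWV hw⟩, by rw [map_mul, MonoidHom.mem_ker.1 hk, mul_one]⟩

variable [IsTopologicalGroup H]

theorem isOpenMap_of_isCompact_of_isOpen_image_subgroup_mul {f : G →* H} (hf : Continuous f)
    {N : Subgroup G} (hN : IsCompact (N : Set G))
    (hsat : ∀ V : Set G, IsOpen V → IsOpen (f '' (N * V))) : IsOpenMap f := by
  refine IsTopologicalGroup.isOpenMap_iff_nhds_one.2 (le_map fun U hU ↦ ?_)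
  obtain ⟨V, hV, hVU⟩ := exists_nhds_one_split hU
  obtain ⟨O, hO, hON⟩ := mem_nhdsWithin_iff_exists_mem_nhds_inter.1
    (image_inter_mem_nhdsWithin_image_of_isCompact hf hN hV)
  obtain ⟨S, hS, hSO⟩ := exists_nhds_split_inv hO
  have hfS : f ⁻¹' S ∈ 𝓝 1 := hf.continuousAt.preimage_mem_nhds (by rwa [map_one])
  set V' := interior (V ∩ f ⁻¹' S)
  have hV'1 : (1 : G) ∈ V' := mem_interior_iff_mem_nhds.2 (inter_mem hV hfS)
  have hNV' : f '' (N * V') ∈ 𝓝 1 :=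
    (hsat V' isOpen_interior).mem_nhds ⟨1, ⟨1, N.one_mem, 1, hV'1, one_mul 1⟩, map_one f⟩
  refine mem_of_superset (inter_mem hNV' hS) ?_
  rintro _ ⟨⟨_, ⟨n, hn, v, hv, rfl⟩, rfl⟩, hS'⟩
  obtain ⟨hvV, hvS⟩ := interior_subset hv
  have hfn : f n ∈ O := by simpa using hSO _ hS' _ hvS
  obtain ⟨n', ⟨-, hn'V⟩, hfn'⟩ := hON ⟨hfn, n, hn, rfl⟩
  exact ⟨n' * v, hVU n' hn'V v hvV, by rw [map_mul, map_mul, hfn']⟩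

end

theorem totallyMinimal_of_compact_kernel_general {G : Type u}
    [Group G] [TopologicalSpace G] [IsTopologicalGroup G]
    (N : Subgroup G) [N.Normal] (hN : IsCompact (N : Set G))
    (h : IsTotallyMinimal.{u, u} (G ⧸ N)) : IsTotallyMinimal.{u, u} G := by
  intro H _ _ _ _ f hf hsurj
  have : (N.map f).Normal := ‹N.Normal›.map f hsurj
  have hK : IsCompact (N.map f : Set H) := by simpa only [Subgroup.coe_map] using hN.image hf
  have : IsClosed (N.map f : Set H) := hK.isClosed
  have hφ := h (H ⧸ N.map f) (QuotientGroup.map N (N.map f) f (N.le_comap_map f))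
    (QuotientGroup.continuous_map N _ f hf _)
    (QuotientGroup.map_surjective_of_surjective (N := N) _ f
      (QuotientGroup.mk_surjective.comp hsurj) _)
  exact isOpenMap_of_isCompact_of_isOpen_image_subgroup_mul hf hN
    fun V hV ↦ isOpen_image_subgroup_mul_of_isOpenMap_map f N hφ hV

theorem totallyMinimal_of_compact_kernel {G : Type u}
    [Group G] [TopologicalSpace G] [IsTopologicalGroup G] [T2Space G]
    (N : Subgroup G) [N.Normal] (hN : IsCompact (N : Set G))
    (h : IsTotallyMinimal.{u, u} (G ⧸ N)) : IsTotallyMinimal.{u, u} G :=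
  totallyMinimal_of_compact_kernel_general N hN h
end
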